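/- arXiv:math/0304059 — 2 statements merged into one kernel-verified Lean document; each statement's English description precedes it below -/
import Mathlib

section
/- Let w be an involution in the symmetric group S_n. Then w avoids both patterns 4231 and 3412 if and only if w is the longest element of some Young subgroup of S_n, i.e., there is a composition c = (n_1, ..., n_k) of n such that w is the permutation that reverses each of the consecutive blocks {1,...,n_1}, {n_1+1,...,n_1+n_2}, ..., of {1,...,n}. -/
/-- `w` is the block-reversal permutation (longest element of the Young subgroup)
associated to the composition `c`: within the block containing position `j`,
`w` maps `j` to its mirror image. -/
def IsBlockRev {n : ℕ} (c : Composition n) (w : Equiv.Perm (Fin n)) : Prop :=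
  ∀ j : Fin n, (w j : ℕ) + (j : ℕ) + 1 =
    c.sizeUpTo (c.index j) + c.sizeUpTo ((c.index j : ℕ) + 1)

/-- `w` avoids the pattern 4231. -/
def Avoids4231 {m : ℕ} (w : Equiv.Perm (Fin m)) : Prop :=
  ¬ ∃ i j k l : Fin m, i < j ∧ j < k ∧ k < l ∧ w l < w j ∧ w j < w k ∧ w k < w i

/-- `w` avoids the pattern 3412. -/
def Avoids3412 {m : ℕ} (w : Equiv.Perm (Fin m)) : Prop :=
  ¬ ∃ i j k l : Fin m, i < j ∧ j < k ∧ k < l ∧ w k < w l ∧ w l < w i ∧ w i < w j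

/-- Number of inversions (Coxeter length) of a permutation. -/
def invNum {n : ℕ} (w : Equiv.Perm (Fin n)) : ℕ :=
  (Finset.univ.filter (fun p : Fin n × Fin n => p.1 < p.2 ∧ w p.2 < w p.1)).card

/-- The Young subgroup associated to a composition `c`: permutations preserving
each consecutive block. -/
def YoungSubgroup {n : ℕ} (c : Composition n) : Subgroup (Equiv.Perm (Fin n)) where
  carrier := {w | ∀ j : Fin n, c.index (w j) = c.index j}
  one_mem' := by intro j; rfl
  mul_mem' := by
    intro a b ha hb j
    have h1 := ha (b j)
    have h2 := hb j
    simpa [Equiv.Perm.mul_apply] using h1.trans h2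
  inv_mem' := by
    intro a ha j
    have h := ha (a⁻¹ j)
    rw [show a (a⁻¹ j) = j from a.apply_symm_apply j] at h
    exact h.symm

/-- The decreasing reordering of a list of naturals. -/
def sortDesc (l : List ℕ) : List ℕ := Multiset.sort (l : Multiset ℕ) (· ≥ ·)

/-- The conjugate of a partition given as a list: `conjList l j = #{i : l i ≥ j+1}`. -/
def conjList (l : List ℕ) : List ℕ :=
  (List.range (l.foldr max 0)).map (fun j => (l.filter (fun a => j + 1 ≤ a)).length)

/-- Schensted row insertion: insert `x` into a row, returning the new row and
the bumped entry (if any). -/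
def insertRow (x : ℕ) : List ℕ → List ℕ × Option ℕ
  | [] => ([x], none)
  | y :: ys =>
    if x < y then (x :: ys, some y)
    else
      let p := insertRow x ys
      (y :: p.1, p.2)

/-- Schensted insertion of `x` into a tableau, returning the new tableau and the
index of the row where a new cell was created. -/
def insertT (x : ℕ) : List (List ℕ) → List (List ℕ) × ℕ
  | [] => ([[x]], 0)
  | r :: rs =>
    match insertRow x r with
    | (r', none) => (r' :: rs, 0)
    | (r', some y) =>
      let p := insertT y rs
      (r' :: p.1, p.2 + 1)

/-- Add a cell labelled `lbl` at the end of row `i` of a tableau. -/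
def addCell (lbl : ℕ) : ℕ → List (List ℕ) → List (List ℕ)
  | _, [] => [[lbl]]
  | 0, r :: rs => (r ++ [lbl]) :: rs
  | i + 1, r :: rs => r :: addCell lbl i rs

/-- The Robinson–Schensted correspondence: maps a word to its pair
(insertion tableau `P`, recording tableau `Q`). -/
def RS (word : List ℕ) : List (List ℕ) × List (List ℕ) :=
  (word.zipIdx.map Prod.swap).foldl
    (fun pq ix =>
      let p := insertT ix.2 pq.1
      (p.1, addCell (ix.1 + 1) p.2 pq.2))
    ([], [])

/-- The one-line word (with values in `{1, …, n}`) of a permutation of `Fin n`. -/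
def wordOf {n : ℕ} (w : Equiv.Perm (Fin n)) : List ℕ :=
  List.ofFn (fun i => (w i : ℕ) + 1)

/-- The shape of a tableau: the list of its row lengths. -/
def shapeOf (t : List (List ℕ)) : List ℕ := t.map List.length

/-- `t` is a standard Young tableau with entries `1, …, n`. -/
def IsStandard (n : ℕ) (t : List (List ℕ)) : Prop :=
  (∀ r ∈ t, List.Pairwise (· < ·) r) ∧
  List.Pairwise (· ≥ ·) (shapeOf t) ∧
  (∀ r ∈ t, r ≠ []) ∧
  (∀ i k : ℕ, i + 1 < t.length → k < (t.getD (i + 1) []).length →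
      (t.getD i []).getD k 0 < (t.getD (i + 1) []).getD k 0) ∧
  t.flatten.Perm (List.range' 1 n)

/-- `t` is a reading tableau: every entry `p` is either in the first row, or
`p - 1` lies in the previous row. -/
def IsReading (t : List (List ℕ)) : Prop :=
  ∀ p ∈ t.flatten,
    t.findIdx (fun r => r.contains p) = 0 ∨
      (p - 1) ∈ t.getD (t.findIdx (fun r => r.contains p) - 1) []

/-- Length of the `j`-th column of the Young diagram of `l`. -/
def colLen (l : List ℕ) (j : ℕ) : ℕ := (l.filter (fun a => j < a)).length

/-- The column superstandard tableau of shape `l`: cells are numbered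
consecutively within each column, columns taken from left to right. -/
def cssTableau (l : List ℕ) : List (List ℕ) :=
  (List.range l.length).map fun i =>
    (List.range (l.getD i 0)).map fun j =>
      ((List.range j).map (colLen l)).sum + i + 1

/-!
A block reversal sends `i < j` to `w i < w j` exactly when `i` and `j` lie in different blocks,
and a 4231 or a 3412 pattern would force two entries of different blocks into the wrong order.

Conversely, let `p` be the first position of a tail `[p, n)` that `w` preserves and put `q = w p`.
Avoiding 3412 forces `w` to map `[p, q]` into itself and avoiding 4231 forces `w` to be decreasing
there, so `w` reverses `[p, q]`; being an involution, `w` then preserves the shorter tail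
`(q, n)`, and the blocks are peeled off one at a time.
-/

open Finset in
theorem Fin.val_add_val_eq_of_strictAntiOn {n : ℕ} {f : Fin n → Fin n} {a b i : Fin n}
    (hf : StrictAntiOn f (Set.Icc a b)) (ha : f a = b) (hb : f b = a) (hi : i ∈ Set.Icc a b) :
    (f i : ℕ) + i = a + b := by
  obtain ⟨hai, hib⟩ := hi
  have hfi_le : f i ≤ b := ha ▸ hf.antitoneOn ⟨le_rfl, hai.trans hib⟩ ⟨hai, hib⟩ hai
  have hle_fi : a ≤ f i := hb ▸ hf.antitoneOn ⟨hai, hib⟩ ⟨hai.trans hib, le_rfl⟩ hib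
  have left : #(Icc a i) ≤ #(Icc (f i) b) := by
    refine card_le_card_of_injOn f (fun x hx => ?_) (hf.injOn.mono fun x hx => ?_)
    · simp only [coe_Icc, Set.mem_Icc] at hx ⊢
      exact ⟨hf.antitoneOn ⟨hx.1, hx.2.trans hib⟩ ⟨hai, hib⟩ hx.2,
        ha ▸ hf.antitoneOn ⟨le_rfl, hai.trans hib⟩ ⟨hx.1, hx.2.trans hib⟩ hx.1⟩
    · simp only [coe_Icc, Set.mem_Icc] at hx
      exact ⟨hx.1, hx.2.trans hib⟩
  have right : #(Icc i b) ≤ #(Icc a (f i)) := by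
    refine card_le_card_of_injOn f (fun x hx => ?_) (hf.injOn.mono fun x hx => ?_)
    · simp only [coe_Icc, Set.mem_Icc] at hx ⊢
      exact ⟨hb ▸ hf.antitoneOn ⟨hai.trans hx.1, hx.2⟩ ⟨hai.trans hib, le_rfl⟩ hx.2,
        hf.antitoneOn ⟨hai, hib⟩ ⟨hai.trans hx.1, hx.2⟩ hx.1⟩
    · simp only [coe_Icc, Set.mem_Icc] at hx
      exact ⟨hai.trans hx.1, hx.2⟩
  rw [Fin.card_Icc, Fin.card_Icc] at left right
  have := Fin.le_iff_val_le_val.1 hai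
  have := Fin.le_iff_val_le_val.1 hib
  have := Fin.le_iff_val_le_val.1 hfi_le
  have := Fin.le_iff_val_le_val.1 hle_fi
  omega

namespace Composition

variable {n : ℕ} (c : Composition n)

theorem lt_sizeUpTo_index_add_one (j : Fin n) : (j : ℕ) < c.sizeUpTo ((c.index j : ℕ) + 1) :=
  c.lt_sizeUpTo_index_succ j

variable {c}

theorem le_index_of_sizeUpTo_le {i : ℕ} {j : Fin n} (h : c.sizeUpTo i ≤ j) :
    i ≤ c.index j := by
  by_contra! hlt
  have : c.sizeUpTo ((c.index j : ℕ) + 1) ≤ c.sizeUpTo i := c.monotone_sizeUpTo hlt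
  have := c.lt_sizeUpTo_index_add_one j
  omega

theorem index_lt_of_lt_sizeUpTo {i : ℕ} {j : Fin n} (h : j < c.sizeUpTo i) : c.index j < i := by
  by_contra! hle
  have := c.monotone_sizeUpTo hle
  have := c.sizeUpTo_index_le j
  omega

theorem index_eq_of_sizeUpTo_le_of_lt {i : ℕ} {j : Fin n} (h₁ : c.sizeUpTo i ≤ j)
    (h₂ : j < c.sizeUpTo (i + 1)) : (c.index j : ℕ) = i :=
  le_antisymm (Nat.le_of_lt_succ (index_lt_of_lt_sizeUpTo h₂)) (le_index_of_sizeUpTo_le h₁)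

theorem index_mono : Monotone c.index := fun i _ hij =>
  Fin.le_iff_val_le_val.2 <| le_index_of_sizeUpTo_le <| (c.sizeUpTo_index_le i).trans hij

theorem lt_of_index_lt {i j : Fin n} (h : c.index i < c.index j) : i < j := by
  have := c.lt_sizeUpTo_index_add_one i
  have : c.sizeUpTo ((c.index i : ℕ) + 1) ≤ c.sizeUpTo (c.index j) :=
    c.monotone_sizeUpTo (Fin.lt_def.1 h)
  have := c.sizeUpTo_index_le j
  exact Fin.lt_def.2 (by omega)

end Composition

namespace IsBlockRev

variable {n : ℕ} {c : Composition n} {w : Equiv.Perm (Fin n)}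

theorem index_apply (h : IsBlockRev c w) (j : Fin n) : c.index (w j) = c.index j := by
  have := h j
  have := c.sizeUpTo_index_le j
  have := c.lt_sizeUpTo_index_add_one j
  exact Fin.ext (Composition.index_eq_of_sizeUpTo_le_of_lt (by omega) (by omega))

theorem apply_lt_apply_iff (h : IsBlockRev c w) {i j : Fin n} (hij : i < j) :
    w i < w j ↔ c.index i < c.index j := by
  refine ⟨fun hw => (Composition.index_mono hij.le).lt_of_ne fun heq => ?_, fun hidx => ?_⟩
  · have hi := h i
    have hj := h j
    rw [heq] at hi
    have := Fin.lt_def.1 hij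
    exact absurd (Fin.lt_def.1 hw) (by omega)
  · exact Composition.lt_of_index_lt (by rwa [h.index_apply, h.index_apply])

theorem avoids4231 (h : IsBlockRev c w) : Avoids4231 w := by
  rintro ⟨i, j, k, l, hij, hjk, hkl, -, hjk', hki'⟩
  have hik : c.index i < c.index k :=
    (Composition.index_mono hij.le).trans_lt ((h.apply_lt_apply_iff hjk).1 hjk')
  exact hki'.not_gt ((h.apply_lt_apply_iff (hij.trans hjk)).2 hik)

theorem avoids3412 (h : IsBlockRev c w) : Avoids3412 w := by
  rintro ⟨i, j, k, l, hij, hjk, hkl, -, hli', hij'⟩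
  have hil : c.index i < c.index l :=
    ((h.apply_lt_apply_iff hij).1 hij').trans_le (Composition.index_mono (hjk.trans hkl).le)
  exact hli'.not_gt ((h.apply_lt_apply_iff (hij.trans (hjk.trans hkl))).2 hil)

end IsBlockRev

def ReversesOn {n : ℕ} (w : Equiv.Perm (Fin n)) (a b : ℕ) : Prop :=
  ∀ j : Fin n, a ≤ j → j < b → (w j : ℕ) + j + 1 = a + b

namespace Equiv.Perm

variable {n : ℕ} {w : Equiv.Perm (Fin n)} (hinv : Function.Involutive w) {p : Fin n}
  (hp : ∀ i, p ≤ i → p ≤ w i)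
include hinv hp

theorem apply_le_of_mem_Icc_of_avoids (h3412 : Avoids3412 w) {i : Fin n}
    (hi : i ∈ Set.Icc p (w p)) : w i ≤ w p := by
  by_contra! hlt
  have hpi : p < i := hi.1.lt_of_ne (by rintro rfl; exact hlt.false)
  have hiq : i < w p := hi.2.lt_of_ne (by rintro rfl; exact (hinv p ▸ hlt).not_ge (hp p le_rfl))
  exact h3412 ⟨p, i, w p, w i, hpi, hiq, hlt, by rwa [hinv, hinv], by rwa [hinv], hlt⟩

theorem strictAntiOn_Icc_of_avoids (h4231 : Avoids4231 w) (h3412 : Avoids3412 w) :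
    StrictAntiOn w (Set.Icc p (w p)) := by
  intro i hi j hj hij
  have hpwi : p < w i := (hp i hi.1).lt_of_ne fun h => by
    rw [← hinv p, w.injective.eq_iff] at h
    exact hij.not_ge (h ▸ hj.2)
  have hwjq : w j < w p := (apply_le_of_mem_Icc_of_avoids hinv hp h3412 hj).lt_of_ne
    (w.injective.ne (hi.1.trans_lt hij).ne')
  rcases hi.1.eq_or_lt with rfl | hpi
  · exact hwjq
  rcases hj.2.eq_or_lt with rfl | hjq
  · rwa [hinv]
  by_contra! hle
  exact h4231 ⟨p, i, j, w p, hpi, hij, hjq, by rwa [hinv],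
    hle.lt_of_ne (w.injective.ne hij.ne), hwjq⟩

theorem val_apply_add_val_of_avoids (h4231 : Avoids4231 w) (h3412 : Avoids3412 w) {i : Fin n}
    (hi : i ∈ Set.Icc p (w p)) : (w i : ℕ) + i = p + w p :=
  Fin.val_add_val_eq_of_strictAntiOn (strictAntiOn_Icc_of_avoids hinv hp h4231 h3412) rfl
    (hinv p) hi

theorem reversesOn_Icc_of_avoids (h4231 : Avoids4231 w) (h3412 : Avoids3412 w) :
    ReversesOn w p (w p + 1) := fun j hpj hjq => by
  have := val_apply_add_val_of_avoids hinv hp h4231 h3412 (i := j)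
    ⟨Fin.le_def.2 hpj, Fin.le_def.2 (Nat.le_of_lt_succ hjq)⟩
  omega

theorem lt_apply_of_lt_of_avoids (h4231 : Avoids4231 w) (h3412 : Avoids3412 w) {i : Fin n}
    (hi : w p < i) : w p < w i := by
  by_contra! hle
  have hpi : p ≤ w i := hp i ((hp p le_rfl).trans hi.le)
  have := val_apply_add_val_of_avoids hinv hp h4231 h3412 ⟨hpi, hle⟩
  rw [hinv] at this
  have := Fin.lt_def.1 hi
  have := Fin.le_def.1 hpi
  omega

end Equiv.Perm

theorem exists_blocks_of_avoids {n : ℕ} {w : Equiv.Perm (Fin n)} (hinv : Function.Involutive w)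
    (h4231 : Avoids4231 w) (h3412 : Avoids3412 w) (s : ℕ) (hsn : s ≤ n)
    (hs : ∀ i : Fin n, s ≤ i → s ≤ w i) :
    ∃ L : List ℕ, (∀ b ∈ L, 0 < b) ∧ s + L.sum = n ∧
      ∀ k < L.length, ReversesOn w (s + (L.take k).sum) (s + (L.take (k + 1)).sum) := by
  rcases hsn.lt_or_eq with hlt | rfl
  · obtain ⟨p, rfl⟩ : ∃ p : Fin n, (p : ℕ) = s := ⟨⟨s, hlt⟩, rfl⟩
    have hp : ∀ i, p ≤ i → p ≤ w i := hs
    have hpq : (p : ℕ) ≤ w p := hp p le_rfl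
    obtain ⟨L, hpos, hsum, hL⟩ := exists_blocks_of_avoids hinv h4231 h3412 (w p + 1) (w p).isLt
      fun _ => w.lt_apply_of_lt_of_avoids hinv hp h4231 h3412
    have hshift : ∀ t, (p : ℕ) + (w p + 1 - p + t) = w p + 1 + t := by omega
    refine ⟨((w p : ℕ) + 1 - p) :: L, ?_, by simp only [List.sum_cons]; omega, ?_⟩
    · rintro b (_ | ⟨_, hb⟩)
      · omega
      · exact hpos b hb
    rintro (_ | k) hk
    · convert w.reversesOn_Icc_of_avoids hinv hp h4231 h3412 using 1 <;> simp; omega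
    · simpa only [List.take_succ_cons, List.sum_cons, hshift] using
        hL k (by simpa using hk)
  · exact ⟨[], by simp, by simp, by simp⟩
termination_by n - s
decreasing_by omega

theorem exists_isBlockRev_of_avoids {n : ℕ} {w : Equiv.Perm (Fin n)}
    (hinv : Function.Involutive w) (h4231 : Avoids4231 w) (h3412 : Avoids3412 w) :
    ∃ c : Composition n, IsBlockRev c w := by
  obtain ⟨L, hpos, hsum, hL⟩ :=
    exists_blocks_of_avoids hinv h4231 h3412 0 n.zero_le fun i _ => (w i).val.zero_le
  let c : Composition n := ⟨L, hpos _, by simpa using hsum⟩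
  refine ⟨c, fun j => ?_⟩
  have hsize : ∀ k, c.sizeUpTo k = 0 + (L.take k).sum := fun k => (zero_add _).symm
  simpa only [hsize] using hL (c.index j) (c.index j).isLt j (hsize _ ▸ c.sizeUpTo_index_le j)
    (hsize _ ▸ c.lt_sizeUpTo_index_add_one j)

/-- An involution in `S_n` avoids the patterns 4231 and 3412 iff it is the
longest element of some Young subgroup, i.e. the block-reversal permutation of
some composition of `n`. -/
theorem involution_avoids_iff_blockRev {n : ℕ} (w : Equiv.Perm (Fin n))
    (hw : w * w = 1) :
    (Avoids4231 w ∧ Avoids3412 w) ↔ ∃ c : Composition n, IsBlockRev c w := by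
  have hinv : Function.Involutive w := DFunLike.congr_fun hw
  exact ⟨fun ⟨h4231, h3412⟩ => exists_isBlockRev_of_avoids hinv h4231 h3412,
    fun ⟨_, hc⟩ => ⟨hc.avoids4231, hc.avoids3412⟩⟩
end

section
/- Let c and c' be two compositions of n. The Young subgroups S_c and S_{c'} are conjugate in S_n if and only if the decreasing reorderings of c and c' are equal. -/
/-!
A Young subgroup is the group of permutations preserving every fibre of the block-index map
`c.index`. Such a fibre stabiliser remembers the partition into fibres (a transposition lies in
it iff its two points share a fibre), and conjugating by `g` moves the fibres by `g`. Hence `S_c`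
and `S_c'` are conjugate iff some permutation of `Fin n` carries the blocks of `c` bijectively
onto those of `c'`, which happens iff `c` and `c'` have the same multiset of block sizes.
-/

open Equiv Function

section FiberStabilizer

variable {α β β' : Type*}

/-- The Young subgroup of the partition of `α` into the fibres of `f`. -/
def fiberStabilizer (f : α → β) : Subgroup (Perm α) where
  carrier := {w | ∀ a, f (w a) = f a}
  one_mem' _ := rfl
  mul_mem' ha hb a := (ha _).trans (hb a)
  inv_mem' {w} hw a := by simpa using (hw (w⁻¹ a)).symm

@[simp]
lemma mem_fiberStabilizer {f : α → β} {w : Perm α} :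
    w ∈ fiberStabilizer f ↔ ∀ a, f (w a) = f a :=
  Iff.rfl

lemma swap_mem_fiberStabilizer_iff [DecidableEq α] {f : α → β} {a b : α} :
    swap a b ∈ fiberStabilizer f ↔ f a = f b := by
  refine ⟨fun h ↦ by simpa using h b, fun h x ↦ ?_⟩
  rcases eq_or_ne x a with rfl | hxa
  · simp [h]
  rcases eq_or_ne x b with rfl | hxb
  · simp [h]
  · rw [swap_apply_of_ne_of_ne hxa hxb]

lemma fiberStabilizer_map_conj (f : α → β) (g : Perm α) :
    (fiberStabilizer f).map (MulAut.conj g).toMonoidHom = fiberStabilizer (f ∘ g.symm) := by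
  ext w
  simp only [Subgroup.mem_map, mem_fiberStabilizer, MulEquiv.coe_toMonoidHom, MulAut.conj_apply,
    comp_apply]
  constructor
  · rintro ⟨v, hv, rfl⟩ a
    simpa [Perm.mul_apply] using hv (g.symm a)
  · intro hw
    refine ⟨g⁻¹ * w * g, fun a ↦ by simpa [Perm.mul_apply] using hw (g a), by group⟩

lemma fiberStabilizer_comp_of_injective {φ : β → β'} (hφ : Injective φ) (f : α → β) :
    fiberStabilizer (φ ∘ f) = fiberStabilizer f := by
  ext w
  simp [hφ.eq_iff]

lemma exists_equiv_comp_eq_of_ker_eq {f : α → β} {f' : α → β'} (hf : Surjective f)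
    (hf' : Surjective f') (h : ∀ a b, f a = f b ↔ f' a = f' b) :
    ∃ φ : β ≃ β', f' = φ ∘ f := by
  have hφ : ∀ a, f' (surjInv hf (f a)) = f' a := fun a ↦ (h _ _).1 (surjInv_eq hf _)
  refine ⟨Equiv.ofBijective (f' ∘ surjInv hf) ⟨fun b₁ b₂ hb ↦ ?_, fun b' ↦ ?_⟩, ?_⟩
  · simpa [surjInv_eq hf] using (h _ _).2 hb
  · obtain ⟨a, rfl⟩ := hf' b'
    exact ⟨f a, hφ a⟩
  · funext a
    exact (hφ a).symm

lemma fiberStabilizer_eq_iff {f : α → β} {f' : α → β'} (hf : Surjective f)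
    (hf' : Surjective f') :
    fiberStabilizer f = fiberStabilizer f' ↔ ∃ φ : β ≃ β', f' = φ ∘ f := by
  constructor
  · intro h
    classical
    refine exists_equiv_comp_eq_of_ker_eq hf hf' fun a b ↦ ?_
    rw [← swap_mem_fiberStabilizer_iff, ← swap_mem_fiberStabilizer_iff, h]
  · rintro ⟨φ, rfl⟩
    exact (fiberStabilizer_comp_of_injective φ.injective f).symm

end FiberStabilizer

section Fibers

variable {α α' β β' : Type*}

lemma exists_equiv_comp_eq_iff_card_fiber [Finite α] [Finite α'] (f : α → β) (f' : α' → β')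
    (φ : β ≃ β') :
    (∃ g : α ≃ α', f' ∘ g = φ ∘ f) ↔
      ∀ b, Nat.card {a // f a = b} = Nat.card {a' // f' a' = φ b} := by
  constructor
  · rintro ⟨g, hg⟩ b
    exact Nat.card_congr (g.subtypeEquiv fun a ↦ by
      rw [show f' (g a) = φ (f a) from congrFun hg a, φ.apply_eq_iff_eq])
  · intro h
    let e b := (Finite.card_eq.1 (h b)).some
    refine ⟨(sigmaFiberEquiv f).symm.trans ((sigmaCongr φ e).trans (sigmaFiberEquiv f')), ?_⟩
    funext a
    exact (e (f a) ⟨a, rfl⟩).2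

lemma count_map_univ_val [Fintype α] [DecidableEq β] (f : α → β) (b : β) :
    (Finset.univ.val.map f).count b = Nat.card {a // f a = b} := by
  rw [Multiset.count_map, Nat.card_eq_fintype_card, Fintype.card_subtype, Finset.card_def,
    Finset.filter_val]
  simp_rw [eq_comm]

lemma map_univ_val_eq_iff_exists_equiv [Fintype α] [Fintype α'] (f : α → β) (f' : α' → β) :
    Finset.univ.val.map f = Finset.univ.val.map f' ↔ ∃ g : α ≃ α', f' ∘ g = f := by
  classical
  simpa [Multiset.ext, count_map_univ_val] using
    (exists_equiv_comp_eq_iff_card_fiber f f' (Equiv.refl β)).symm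

end Fibers

namespace Composition

variable {n : ℕ}

lemma surjective_index (c : Composition n) : Surjective c.index := fun i ↦
  ⟨c.embedding i ⟨0, c.one_le_blocks (c.blocksFun_mem_blocks i)⟩, c.index_embedding i _⟩

lemma card_index_fiber (c : Composition n) (i : Fin c.length) :
    Nat.card {j // c.index j = i} = c.blocksFun i := by
  rw [← Nat.card_fin (c.blocksFun i), ← Nat.card_range_of_injective (c.embedding i).injective]
  exact Nat.card_congr (subtypeEquivRight fun j ↦ by rw [c.mem_range_embedding_iff', eq_comm])

end Composition

lemma youngSubgroup_eq_fiberStabilizer {n : ℕ} (c : Composition n) :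
    YoungSubgroup c = fiberStabilizer c.index :=
  rfl

lemma youngSubgroup_map_conj_eq_iff {n : ℕ} (c c' : Composition n) (g : Perm (Fin n)) :
    (YoungSubgroup c).map (MulAut.conj g).toMonoidHom = YoungSubgroup c' ↔
      ∃ φ : Fin c.length ≃ Fin c'.length, c'.index ∘ g = φ ∘ c.index := by
  rw [youngSubgroup_eq_fiberStabilizer, youngSubgroup_eq_fiberStabilizer,
    fiberStabilizer_map_conj,
    fiberStabilizer_eq_iff (c.surjective_index.comp g.symm.surjective) c'.surjective_index]
  simp only [← comp_assoc, eq_comp_symm]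

lemma sortDesc_eq_iff_perm {l l' : List ℕ} : sortDesc l = sortDesc l' ↔ l.Perm l' := by
  rw [← Multiset.coe_eq_coe]
  refine ⟨fun h ↦ ?_, fun h ↦ by rw [sortDesc, sortDesc, h]⟩
  simpa only [sortDesc, Multiset.sort_eq] using congrArg ((↑) : List ℕ → Multiset ℕ) h

/-- Two Young subgroups of `S_n` are conjugate iff the decreasing reorderings
of the corresponding compositions coincide. -/
theorem youngSubgroup_conjugate_iff {n : ℕ} (c c' : Composition n) :
    (∃ g : Equiv.Perm (Fin n),
        (YoungSubgroup c).map (MulAut.conj g).toMonoidHom = YoungSubgroup c') ↔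
      sortDesc c.blocks = sortDesc c'.blocks := by
  calc (∃ g : Perm (Fin n), (YoungSubgroup c).map (MulAut.conj g).toMonoidHom = YoungSubgroup c')
      ↔ ∃ φ : Fin c.length ≃ Fin c'.length, ∃ g : Perm (Fin n), c'.index ∘ g = φ ∘ c.index := by
        simp only [youngSubgroup_map_conj_eq_iff]
        exact exists_comm
    _ ↔ ∃ φ : Fin c.length ≃ Fin c'.length, c'.blocksFun ∘ φ = c.blocksFun := by
        simp only [exists_equiv_comp_eq_iff_card_fiber, Composition.card_index_fiber]
        simp only [funext_iff, comp_apply, eq_comm]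
    _ ↔ c.blocks.Perm c'.blocks := by
        rw [← c.ofFn_blocksFun, ← c'.ofFn_blocksFun, ← Multiset.coe_eq_coe, ← Fin.univ_val_map,
          ← Fin.univ_val_map, map_univ_val_eq_iff_exists_equiv]
    _ ↔ sortDesc c.blocks = sortDesc c'.blocks := sortDesc_eq_iff_perm.symm
end
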